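/- For all nonzero x, x̃ ∈ ℝ³, the quantity g₁ := (x - x̃)·(b(x) - b(x̃)) + ‖σ(x) - σ(x̃)‖² satisfies g₁ ≤ 2(x·x̃)(|x|^{γ/2} - |x̃|^{γ/2})² ≤ 2·min(|x|,|x̃|)^γ · |x - x̃|². -/

import Mathlib

noncomputable def norm3 (x : Fin 3 → ℝ) : ℝ := Real.sqrt (∑ i, (x i)^2)

noncomputable def dot3 (x y : Fin 3 → ℝ) : ℝ := ∑ i, x i * y i

noncomputable def projM (x : Fin 3 → ℝ) : Matrix (Fin 3) (Fin 3) ℝ :=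
  1 - (norm3 x ^ 2)⁻¹ • Matrix.of (fun i j => x i * x j)

noncomputable def sigmaM (γ : ℝ) (x : Fin 3 → ℝ) : Matrix (Fin 3) (Fin 3) ℝ :=
  norm3 x ^ (1 + γ/2) • projM x

noncomputable def frob2 (A : Matrix (Fin 3) (Fin 3) ℝ) : ℝ := Matrix.trace (A * A.transpose)

noncomputable def minner (A B : Matrix (Fin 3) (Fin 3) ℝ) : ℝ := Matrix.trace (A * B.transpose)

noncomputable def bfun (γ : ℝ) (x : Fin 3 → ℝ) : Fin 3 → ℝ := (-2 * norm3 x ^ γ) • x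

/-!
Write r = |x|, s = |x̃|, c = x·x̃, A = r^{γ/2}, B = s^{γ/2}. The projections P_x = I - xx*/|x|²
satisfy ‖P_x‖² = 2 and ⟨P_x, P_x̃⟩ = 1 + c²/(r²s²), which turns g₁ into the exact identity
g₁ = 2c(A - B)² - 2AB(rs - c)²/(rs); this gives the first bound.

For the second, let s ≤ r. Since c ≤ rs by Cauchy–Schwarz and |x - x̃|² = r² + s² - 2c, it
suffices that rs(A - B)² ≤ B²(r - s)². Scaling by t = r/s this is t(t^{γ/2} - 1)² ≤ (t - 1)²,
which holds because 1 ≤ t^{γ/2} ≤ √t for γ ≤ 1.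
-/

theorem mul_rpow_sub_one_sq_le {t p : ℝ} (ht : 1 ≤ t) (hp0 : 0 ≤ p) (hp : p ≤ 1 / 2) :
    t * (t ^ p - 1) ^ 2 ≤ (t - 1) ^ 2 := by
  have hsqrt : t ^ p ≤ √t := by
    rw [Real.sqrt_eq_rpow]; exact Real.rpow_le_rpow_of_exponent_le ht hp
  have hone : 1 ≤ t ^ p := Real.one_le_rpow ht hp0
  have hsqrt_one : 1 ≤ √t := hone.trans hsqrt
  have hsqrt_sq : √t ^ 2 = t := Real.sq_sqrt (by linarith)
  calc t * (t ^ p - 1) ^ 2 ≤ t * (√t - 1) ^ 2 := by gcongr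
    _ = (t - √t) ^ 2 := by linear_combination (t - 1) * hsqrt_sq
    _ ≤ (t - 1) ^ 2 := by gcongr; nlinarith

theorem mul_rpow_sub_rpow_sq_le {r s p : ℝ} (hs : 0 < s) (hsr : s ≤ r) (hp0 : 0 ≤ p)
    (hp : p ≤ 1 / 2) : r * s * (r ^ p - s ^ p) ^ 2 ≤ (s ^ p) ^ 2 * (r - s) ^ 2 := by
  obtain ⟨t, ht, rfl⟩ : ∃ t, 1 ≤ t ∧ r = t * s :=
    ⟨r / s, (one_le_div hs).2 hsr, (div_mul_cancel₀ r hs.ne').symm⟩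
  have key := mul_le_mul_of_nonneg_left (mul_rpow_sub_one_sq_le ht hp0 hp)
    (by positivity : 0 ≤ s ^ 2 * (s ^ p) ^ 2)
  rw [Real.mul_rpow (by linarith) hs.le]
  linear_combination key

theorem rpow_eq_rpow_half_sq {t : ℝ} (ht : 0 ≤ t) (γ : ℝ) : t ^ γ = (t ^ (γ / 2)) ^ 2 := by
  rw [← Real.rpow_mul_natCast ht]; norm_num

theorem mul_rpow_sub_rpow_sq_le_min_rpow {r s c γ : ℝ} (hr : 0 < r) (hs : 0 < s)
    (hc : c ≤ r * s) (hγ0 : 0 ≤ γ) (hγ1 : γ ≤ 1) :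
    2 * c * (r ^ (γ / 2) - s ^ (γ / 2)) ^ 2 ≤ 2 * min r s ^ γ * (r ^ 2 + s ^ 2 - 2 * c) := by
  wlog hsr : s ≤ r generalizing r s
  · have := this hs hr (by linarith) (by linarith)
    rw [min_comm]; linear_combination this
  have key := mul_rpow_sub_rpow_sq_le hs hsr (by linarith : 0 ≤ γ / 2) (by linarith)
  rw [min_eq_right hsr, rpow_eq_rpow_half_sq hs.le γ]
  nlinarith [mul_le_mul_of_nonneg_right hc
    (by positivity : 0 ≤ (r ^ (γ / 2) - s ^ (γ / 2)) ^ 2 + 2 * (s ^ (γ / 2)) ^ 2)]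

theorem norm3_sq (x : Fin 3 → ℝ) : norm3 x ^ 2 = dot3 x x := by
  rw [norm3, Real.sq_sqrt (by positivity), dot3]
  simp only [sq]

theorem norm3_pos {x : Fin 3 → ℝ} (hx : x ≠ 0) : 0 < norm3 x := by
  refine Real.sqrt_pos.2 (Finset.sum_pos' (fun i _ => sq_nonneg _) ?_)
  obtain ⟨i, hi⟩ := Function.ne_iff.1 hx
  exact ⟨i, Finset.mem_univ i, sq_pos_of_ne_zero hi⟩

theorem dot3_le_norm3_mul_norm3 (x y : Fin 3 → ℝ) : dot3 x y ≤ norm3 x * norm3 y :=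
  Real.sum_mul_le_sqrt_mul_sqrt _ x y

theorem norm3_sub_sq (x y : Fin 3 → ℝ) :
    norm3 (x - y) ^ 2 = norm3 x ^ 2 + norm3 y ^ 2 - 2 * dot3 x y := by
  simp only [norm3_sq, dot3, Fin.sum_univ_three, Pi.sub_apply]
  ring

theorem dot3_sub_bfun_sub (γ : ℝ) (x y : Fin 3 → ℝ) :
    dot3 (x - y) (bfun γ x - bfun γ y)
      = -2 * norm3 x ^ γ * norm3 x ^ 2 - 2 * norm3 y ^ γ * norm3 y ^ 2
        + 2 * (norm3 x ^ γ + norm3 y ^ γ) * dot3 x y := by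
  simp only [norm3_sq, dot3, bfun, Pi.sub_apply, Pi.smul_apply, smul_eq_mul, Fin.sum_univ_three]
  ring

theorem minner_comm (A B : Matrix (Fin 3) (Fin 3) ℝ) : minner A B = minner B A := by
  rw [minner, minner, ← Matrix.trace_transpose, Matrix.transpose_mul, Matrix.transpose_transpose]

theorem frob2_smul_sub_smul (a b : ℝ) (A B : Matrix (Fin 3) (Fin 3) ℝ) :
    frob2 (a • A - b • B) = a ^ 2 * frob2 A + b ^ 2 * frob2 B - 2 * a * b * minner A B := by
  have hBA := minner_comm B A
  simp only [frob2, minner] at hBA ⊢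
  simp only [Matrix.transpose_sub, Matrix.transpose_smul, Matrix.sub_mul, Matrix.mul_sub,
    Matrix.smul_mul, Matrix.mul_smul, Matrix.trace_sub, Matrix.trace_smul, smul_eq_mul, hBA]
  ring

theorem frob2_projM {x : Fin 3 → ℝ} (hx : x ≠ 0) : frob2 (projM x) = 2 := by
  have hn := (pow_pos (norm3_pos hx) 2).ne'
  simp only [frob2, projM, norm3_sq, dot3, Matrix.trace, Matrix.diag, Matrix.mul_apply,
    Matrix.transpose_apply, Matrix.sub_apply, Matrix.smul_apply, Matrix.of_apply,
    Matrix.one_apply, smul_eq_mul, Fin.sum_univ_three, Fin.ext_iff, Fin.val_zero, Fin.val_one,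
    Fin.val_two] at hn ⊢
  simp only [← sq] at hn ⊢
  norm_num
  field_simp
  ring

theorem minner_projM {x y : Fin 3 → ℝ} (hx : x ≠ 0) (hy : y ≠ 0) :
    minner (projM x) (projM y) = 1 + dot3 x y ^ 2 / (norm3 x ^ 2 * norm3 y ^ 2) := by
  have hnx := (pow_pos (norm3_pos hx) 2).ne'
  have hny := (pow_pos (norm3_pos hy) 2).ne'
  simp only [minner, projM, norm3_sq, dot3, Matrix.trace, Matrix.diag, Matrix.mul_apply,
    Matrix.transpose_apply, Matrix.sub_apply, Matrix.smul_apply, Matrix.of_apply,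
    Matrix.one_apply, smul_eq_mul, Fin.sum_univ_three, Fin.ext_iff, Fin.val_zero, Fin.val_one,
    Fin.val_two] at hnx hny ⊢
  simp only [← sq] at hnx hny ⊢
  norm_num
  field_simp
  ring

theorem frob2_sigmaM_sub {x y : Fin 3 → ℝ} (γ : ℝ) (hx : x ≠ 0) (hy : y ≠ 0) :
    frob2 (sigmaM γ x - sigmaM γ y)
      = 2 * (norm3 x ^ (1 + γ / 2)) ^ 2 + 2 * (norm3 y ^ (1 + γ / 2)) ^ 2
        - 2 * norm3 x ^ (1 + γ / 2) * norm3 y ^ (1 + γ / 2)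
          * (1 + dot3 x y ^ 2 / (norm3 x ^ 2 * norm3 y ^ 2)) := by
  rw [sigmaM, sigmaM, frob2_smul_sub_smul, frob2_projM hx, frob2_projM hy, minner_projM hx hy]
  ring

theorem dot3_sub_bfun_sub_add_frob2_sigmaM_sub {x y : Fin 3 → ℝ} (γ : ℝ) (hx : x ≠ 0)
    (hy : y ≠ 0) :
    dot3 (x - y) (bfun γ x - bfun γ y) + frob2 (sigmaM γ x - sigmaM γ y)
      = 2 * dot3 x y * (norm3 x ^ (γ / 2) - norm3 y ^ (γ / 2)) ^ 2
        - 2 * norm3 x ^ (γ / 2) * norm3 y ^ (γ / 2)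
          * (norm3 x * norm3 y - dot3 x y) ^ 2 / (norm3 x * norm3 y) := by
  have hr := norm3_pos hx
  have hs := norm3_pos hy
  have hmul {t : ℝ} (ht : 0 < t) : t ^ (1 + γ / 2) = t * t ^ (γ / 2) := by
    rw [Real.rpow_add ht, Real.rpow_one]
  rw [dot3_sub_bfun_sub, frob2_sigmaM_sub γ hx hy, rpow_eq_rpow_half_sq hr.le γ, rpow_eq_rpow_half_sq hs.le γ, hmul hr, hmul hs]
  field_simp
  ring

theorem stmt16 (γ : ℝ) (hγ : γ ∈ Set.Ioc (0:ℝ) 1) (x y : Fin 3 → ℝ) (hx : x ≠ 0) (hy : y ≠ 0) :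
    dot3 (x - y) (bfun γ x - bfun γ y) + frob2 (sigmaM γ x - sigmaM γ y)
        ≤ 2 * dot3 x y * (norm3 x ^ (γ/2) - norm3 y ^ (γ/2))^2
    ∧ 2 * dot3 x y * (norm3 x ^ (γ/2) - norm3 y ^ (γ/2))^2
        ≤ 2 * min (norm3 x) (norm3 y) ^ γ * norm3 (x - y) ^ 2 := by
  have hr := norm3_pos hx
  have hs := norm3_pos hy
  constructor
  · rw [dot3_sub_bfun_sub_add_frob2_sigmaM_sub γ hx hy, sub_le_self_iff]
    positivity
  · rw [norm3_sub_sq]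
    exact mul_rpow_sub_rpow_sq_le_min_rpow hr hs (dot3_le_norm3_mul_norm3 x y) hγ.1.le hγ.2
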